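/- Let $K$ be a field of characteristic zero and consider $K((t))[L]$ (polynomials in a symbol $L$, standing for $\log t$, with Laurent series coefficients), with derivation $d$ determined by $d(t) = dt$ and $d(L) = dt/t$. An element $\omega = g\, dt$ with $g \in K((t))[L]$ lies in the image of $d: K((t))[L] \to K((t))[L]\,dt$ if and only if, writing $g = \sum_j g_j L^j$, an explicit integrability condition holds; moreover, when $\omega$ is in the image of $d$, there is a unique preimage $\int \omega \in K((t))[L]$ whose constant term (the coefficient of $t^0 L^0$) is zero. -/

import Mathlib

/-- Formal derivative `d/dt` of a formal Laurent series. -/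
noncomputable def lderiv {K : Type*} [Field K] (f : LaurentSeries K) : LaurentSeries K where
  coeff n := ((n + 1 : ℤ) : K) * f.coeff (n + 1)
  isPWO_support' := by
    apply Set.IsPWO.mono
      (Set.IsPWO.image_of_monotone f.isPWO_support'
        (f := fun n : ℤ => n - 1) (fun x y h => by simpa using h))
    intro n hn
    have h1 : f.coeff (n + 1) ≠ 0 := by
      intro h
      apply hn
      simp only [Function.mem_support, not_not] at *
      simp [h]
    exact ⟨n + 1, h1, by ring⟩

/-- The derivation `d` on `K((t))[L]` (where the variable `L` stands for `log t`),
determined by `d(t) = dt` and `d(L) = dt/t`: an element `∑_j g_j L^j` is sent to the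
coefficient of `dt`, namely `∑_j g_j' L^j + ∑_j j·g_j·t⁻¹·L^{j-1}`. -/
noncomputable def Dlog {K : Type*} [Field K] (F : Polynomial (LaurentSeries K)) :
    Polynomial (LaurentSeries K) :=
  F.sum fun j c =>
    Polynomial.C (lderiv c) * Polynomial.X ^ j +
      (j : ℤ) • (Polynomial.C (c * HahnSeries.single (-1 : ℤ) (1 : K)) *
        Polynomial.X ^ (j - 1))

section aux
variable {K : Type*} [Field K]

lemma lderiv_coeff (f : LaurentSeries K) (n : ℤ) :
    (lderiv f).coeff n = ((n + 1 : ℤ) : K) * f.coeff (n + 1) := rfl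

lemma lderiv_zero : lderiv (0 : LaurentSeries K) = 0 := by
  ext n; simp [lderiv_coeff]

lemma mul_s_coeff (c : LaurentSeries K) (n : ℤ) :
    (c * HahnSeries.single (-1 : ℤ) (1 : K)).coeff n = c.coeff (n + 1) := by
  have := HahnSeries.coeff_mul_single_add (r := (1:K)) (x := c) (a := n+1) (b := (-1:ℤ))
  simp only [mul_one] at this
  rw [← this]; ring_nf

/-- coefficient extraction as an additive hom -/
noncomputable def coeffHom (n : ℤ) : LaurentSeries K →+ K where
  toFun f := f.coeff n
  map_zero' := rfl
  map_add' _ _ := rfl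

lemma zsmul_term (j : ℕ) (c : LaurentSeries K) (m : ℕ) :
    ((j : ℤ) • (Polynomial.C c * Polynomial.X ^ m) : Polynomial (LaurentSeries K))
      = Polynomial.C (HahnSeries.single (0:ℤ) ((j:K)) * c) * Polynomial.X ^ m := by
  have h0 := zsmul_eq_mul (α := Polynomial (LaurentSeries K))
    (Polynomial.C c * Polynomial.X ^ m) (j:ℤ)
  refine Eq.trans h0 ?_
  have h1 : ((j : ℤ) : Polynomial (LaurentSeries K))
      = Polynomial.C (((j:ℤ) : LaurentSeries K)) := (Polynomial.C_eq_intCast _).symm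
  have h2 : (((j:ℤ)) : LaurentSeries K) = HahnSeries.single (0:ℤ) ((j:K)) := by
    rw [← HahnSeries.C_apply, ← map_intCast (HahnSeries.C : K →+* LaurentSeries K) (j:ℤ)]
    norm_num
  rw [h1, h2, ← mul_assoc, ← Polynomial.C_mul]

lemma Dcoeff {K : Type*} [Field K] (F : Polynomial (LaurentSeries K)) (k : ℕ) (n : ℤ) :
    ((Dlog F).coeff k).coeff n
      = ((n + 1 : ℤ) : K) * ((F.coeff k).coeff (n + 1))
        + ((k + 1 : ℕ) : K) * ((F.coeff (k + 1)).coeff (n + 1)) := by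
  have hD : Dlog F = F.sum fun j c =>
      Polynomial.C (lderiv c) * Polynomial.X ^ j +
      Polynomial.C (HahnSeries.single (0:ℤ) ((j:K)) * (c * HahnSeries.single (-1 : ℤ) (1 : K))) *
        Polynomial.X ^ (j - 1) := by
    rw [Dlog]
    refine Finset.sum_congr rfl fun j _ => ?_
    simp only [zsmul_term]
  rw [hD, Polynomial.sum, Polynomial.finset_sum_coeff]
  simp only [Polynomial.coeff_add, Polynomial.coeff_C_mul, Polynomial.coeff_X_pow,
    mul_ite, mul_one, mul_zero]
  rw [show ∀ x : LaurentSeries K, x.coeff n = coeffHom n x from fun _ => rfl, map_sum]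
  simp only [map_add]
  rw [Finset.sum_add_distrib]
  congr 1
  · rw [Finset.sum_congr rfl (fun j _ => apply_ite (coeffHom n) (k = j) _ 0)]
    simp only [map_zero]
    rw [Finset.sum_ite_eq F.support k (fun j => coeffHom n (lderiv (F.coeff j)))]
    split_ifs with h
    · exact lderiv_coeff _ _
    · rw [Polynomial.notMem_support_iff.mp h]
      show (0:K) = ((n+1:ℤ):K) * (0:LaurentSeries K).coeff (n+1)
      simp
  · rw [Finset.sum_eq_single (k + 1)]
    · simp only [Nat.add_sub_cancel, if_pos rfl]
      show (HahnSeries.single (0:ℤ) (((k+1:ℕ)):K) * (F.coeff (k+1) * HahnSeries.single (-1:ℤ) (1:K))).coeff n = _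
      rw [HahnSeries.coeff_single_zero_mul, mul_s_coeff]
    · intro j hj hne
      rcases Nat.eq_zero_or_pos j with rfl | hpos
      · show coeffHom n (if k = 0 - 1 then _ else 0) = 0
        split_ifs with h
        · show (HahnSeries.single (0:ℤ) ((0:ℕ):K) * _).coeff n = 0
          rw [HahnSeries.coeff_single_zero_mul]
          simp
        · simp
      · have : k ≠ j - 1 := by omega
        rw [if_neg this, map_zero]
    · intro h
      rw [Polynomial.notMem_support_iff.mp h]
      split_ifs with hk
      · show (HahnSeries.single (0:ℤ) (((k+1:ℕ)):K) * ((0:LaurentSeries K) * _)).coeff n = 0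
        simp
      · simp


lemma Dlog_sub (F G : Polynomial (LaurentSeries K)) :
    Dlog (F - G) = Dlog F - Dlog G := by
  apply Polynomial.ext; intro k
  apply HahnSeries.ext; funext n
  rw [Polynomial.coeff_sub, HahnSeries.coeff_sub, Dcoeff, Dcoeff, Dcoeff,
    Polynomial.coeff_sub, Polynomial.coeff_sub, HahnSeries.coeff_sub, HahnSeries.coeff_sub]
  ring

lemma Dlog_C_C (a : K) : Dlog (Polynomial.C (HahnSeries.C a)) = 0 := by
  apply Polynomial.ext; intro k
  apply HahnSeries.ext; funext n
  rw [Dcoeff, Polynomial.coeff_C, Polynomial.coeff_C, if_neg (Nat.succ_ne_zero k)]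
  simp only [HahnSeries.coeff_zero, mul_zero, add_zero, Polynomial.coeff_zero]
  split_ifs with hk
  · rcases eq_or_ne (n + 1) 0 with h | h
    · rw [h]; simp
    · rw [HahnSeries.C_apply, HahnSeries.coeff_single_of_ne (Ne.symm (Ne.symm h))]
      simp
  · simp

variable [CharZero K]

lemma ker_Dlog {F : Polynomial (LaurentSeries K)} (h : Dlog F = 0) :
    F = Polynomial.C (HahnSeries.C ((F.coeff 0).coeff 0)) := by
  have rel : ∀ (k : ℕ) (m : ℤ), (m : K) * (F.coeff k).coeff m
      + ((k + 1 : ℕ) : K) * (F.coeff (k + 1)).coeff m = 0 := by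
    intro k m
    have h0 : ((Dlog F).coeff k).coeff (m - 1) = 0 := by rw [h]; simp
    rw [Dcoeff] at h0
    simpa using h0
  have hm : ∀ (i k : ℕ) (m : ℤ), m ≠ 0 → F.natDegree + 1 ≤ k + i →
      (F.coeff k).coeff m = 0 := by
    intro i
    induction i with
    | zero =>
      intro k m _ hk
      rw [Polynomial.coeff_eq_zero_of_natDegree_lt (by omega)]
      simp
    | succ i ih =>
      intro k m hm0 hk
      by_cases hki : F.natDegree + 1 ≤ k + i
      · exact ih k m hm0 hki
      · have h1 := rel k m
        rw [ih (k + 1) m hm0 (by omega), mul_zero, add_zero] at h1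
        exact (mul_eq_zero.mp h1).resolve_left (Int.cast_ne_zero.mpr hm0)
  have hne : ∀ (k : ℕ) (m : ℤ), m ≠ 0 → (F.coeff k).coeff m = 0 :=
    fun k m h0 => hm (F.natDegree + 1) k m h0 (by omega)
  have hzero : ∀ k : ℕ, (F.coeff (k + 1)).coeff 0 = 0 := by
    intro k
    have h1 := rel k 0
    rw [Int.cast_zero, zero_mul, zero_add] at h1
    exact (mul_eq_zero.mp h1).resolve_left (Nat.cast_ne_zero.mpr (Nat.succ_ne_zero k))
  apply Polynomial.ext; intro j
  rw [Polynomial.coeff_C]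
  cases j with
  | zero =>
    rw [if_pos rfl]
    apply HahnSeries.ext; funext m
    rcases eq_or_ne m 0 with rfl | hm0
    · rw [HahnSeries.C_apply, HahnSeries.coeff_single_same]
    · rw [HahnSeries.C_apply, HahnSeries.coeff_single_of_ne hm0, hne 0 m hm0]
  | succ j =>
    rw [if_neg (Nat.succ_ne_zero j)]
    apply HahnSeries.ext; funext m
    rcases eq_or_ne m 0 with rfl | hm0
    · rw [hzero j]; simp
    · rw [hne (j + 1) m hm0]; simp

end aux

/-- In `K((t))[L]` with `K` of characteristic zero and derivation `d` with `d(t) = dt`,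
`d(L) = dt/t`: the kernel of `d` consists exactly of the constants `K`, and consequently
every `ω = g·dt` in the image of `d` has a unique preimage `∫ω` whose constant term
(the coefficient of `t⁰L⁰`) is zero. -/
theorem stmt17 (K : Type*) [Field K] [CharZero K] :
    (∀ F : Polynomial (LaurentSeries K),
      Dlog F = 0 ↔ ∃ cst : K, F = Polynomial.C (HahnSeries.C cst)) ∧
    (∀ g : Polynomial (LaurentSeries K), (∃ F, Dlog F = g) →
      ∃! F : Polynomial (LaurentSeries K), Dlog F = g ∧ (F.coeff 0).coeff 0 = 0) := by
  constructor
  · intro F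
    constructor
    · intro h
      exact ⟨(F.coeff 0).coeff 0, ker_Dlog h⟩
    · rintro ⟨cst, rfl⟩
      exact Dlog_C_C cst
  · rintro g ⟨F0, hF0⟩
    set a := (F0.coeff 0).coeff 0 with ha
    refine ⟨F0 - Polynomial.C (HahnSeries.C a), ⟨?_, ?_⟩, ?_⟩
    · rw [Dlog_sub, hF0, Dlog_C_C]; abel
    · rw [Polynomial.coeff_sub, HahnSeries.coeff_sub, Polynomial.coeff_C_zero,
        HahnSeries.C_apply, HahnSeries.coeff_single_same]
      simp [ha]
    · rintro y ⟨hy1, hy2⟩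
      have hsub : Dlog (y - (F0 - Polynomial.C (HahnSeries.C a))) = 0 := by
        rw [Dlog_sub, hy1, Dlog_sub, hF0, Dlog_C_C]; abel
      have hker := ker_Dlog hsub
      have hc : ((y - (F0 - Polynomial.C (HahnSeries.C a))).coeff 0).coeff 0 = 0 := by
        rw [Polynomial.coeff_sub, HahnSeries.coeff_sub, hy2, Polynomial.coeff_sub,
          HahnSeries.coeff_sub, Polynomial.coeff_C_zero, HahnSeries.C_apply,
          HahnSeries.coeff_single_same]
        simp [ha]
      rw [hc] at hker
      have : y - (F0 - Polynomial.C (HahnSeries.C a)) = 0 := by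
        rw [hker]; simp
      exact sub_eq_zero.mp this
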